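/- Let γ > 0, X ∈ St(d,r), h : ℝ^{d×r} → ℝ convex, and v, w ∈ ℝ^{d×r}. Let ζ be a minimizer over T_X of ζ' ↦ ⟨v, ζ'⟩ + (1/(2γ))‖ζ'‖² + h(X + ζ'), and let ξ be a minimizer over T_X of ξ' ↦ ⟨w, ξ'⟩ + (1/(2γ))‖ξ'‖² + h(X + ξ'). Then ‖ξ − ζ‖ ≤ γ‖v − w‖. -/

import Mathlib

open Matrix MeasureTheory Finset

noncomputable section

/-- The space of real `d × r` matrices. -/
abbrev Mat (d r : ℕ) := Matrix (Fin d) (Fin r) ℝ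

/-- The Frobenius inner product `⟨A, B⟩ = tr(Aᵀ B)`. -/
def finner {d r : ℕ} (A B : Mat d r) : ℝ := (Aᵀ * B).trace

/-- The Stiefel manifold `St(d,r) = {X : Xᵀ X = I}`. -/
def Stiefel {d r : ℕ} (X : Mat d r) : Prop := Xᵀ * X = 1

/-- The tangent space to the Stiefel manifold at `X`:
`T_X = {ζ : ζᵀ X + Xᵀ ζ = 0}`. -/
def TangentAt {d r : ℕ} (X : Mat d r) : Set (Mat d r) :=
  {ζ | ζᵀ * X + Xᵀ * ζ = 0}

lemma posSemidef_one_add_transpose_mul_self {d r : ℕ} (ξ : Mat d r) :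
    (1 + ξᵀ * ξ).PosSemidef := by
  have h := Matrix.posSemidef_conjTranspose_mul_self ξ
  rw [Matrix.conjTranspose_eq_transpose_of_trivial] at h
  exact Matrix.PosSemidef.one.add h

/-- The positive semidefinite square root of a positive semidefinite matrix
(removed from Mathlib; restored with its December 2024 definition). -/
def Matrix.PosSemidef.sqrt {n : Type*} [Fintype n] [DecidableEq n]
    {A : Matrix n n ℝ} (hA : A.PosSemidef) : Matrix n n ℝ :=
  hA.1.eigenvectorUnitary.1 * diagonal ((↑) ∘ (√·) ∘ hA.1.eigenvalues) *
    (star hA.1.eigenvectorUnitary : Matrix n n ℝ)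

/-- The polar retraction `Retr_X(ξ) = (X + ξ)(I + ξᵀ ξ)^{-1/2}`, where the square root
is the unique positive-semidefinite (here positive-definite) square root. -/
def polarRetr {d r : ℕ} (X ξ : Mat d r) : Mat d r :=
  (X + ξ) * ((posSemidef_one_add_transpose_mul_self ξ).sqrt)⁻¹

/- Equip matrices with the Frobenius norm (the norm induced by `finner`). -/
attribute [local instance] Matrix.frobeniusNormedAddCommGroup Matrix.frobeniusNormedSpace

/-- The subproblem objective `φ(ζ) = ⟨v, ζ⟩ + (1/(2γ))‖ζ‖² + h(X + ζ)`. -/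
def phi {d r : ℕ} (γ : ℝ) (h : Mat d r → ℝ) (X v ζ : Mat d r) : ℝ :=
  finner v ζ + (1 / (2 * γ)) * ‖ζ‖ ^ 2 + h (X + ζ)

/-- `ζ` is a minimizer of `phi γ h X v` over the tangent space at `X`. -/
def IsSubMin {d r : ℕ} (γ : ℝ) (h : Mat d r → ℝ) (X v ζ : Mat d r) : Prop :=
  ζ ∈ TangentAt X ∧ ∀ ζ' ∈ TangentAt X, phi γ h X v ζ ≤ phi γ h X v ζ'

lemma finner_sum {d r : ℕ} (A B : Mat d r) : finner A B = ∑ i, ∑ j, A i j * B i j := by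
  simp [finner, Matrix.trace, Matrix.mul_apply, Matrix.diag, Matrix.transpose_apply]
  rw [Finset.sum_comm]

lemma sq_norm {d r : ℕ} (A : Mat d r) : ‖A‖ ^ 2 = finner A A := by
  rw [Matrix.frobenius_norm_def, finner_sum]
  rw [← Real.rpow_natCast (_ ^ (_:ℝ)) 2, ← Real.rpow_mul (by positivity)]
  norm_num
  congr 1; ext i; congr 1; ext j; ring

lemma finner_add_left {d r : ℕ} (A B C : Mat d r) :
    finner (A + B) C = finner A C + finner B C := by
  simp [finner, Matrix.transpose_add, Matrix.add_mul]

lemma finner_add_right {d r : ℕ} (A B C : Mat d r) :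
    finner A (B + C) = finner A B + finner A C := by
  simp [finner, Matrix.mul_add]

lemma finner_smul_left {d r : ℕ} (t : ℝ) (A B : Mat d r) :
    finner (t • A) B = t * finner A B := by
  simp [finner, Matrix.transpose_smul, Matrix.smul_mul]

lemma finner_smul_right {d r : ℕ} (t : ℝ) (A B : Mat d r) :
    finner A (t • B) = t * finner A B := by
  simp [finner, Matrix.mul_smul]

lemma finner_neg_left {d r : ℕ} (A B : Mat d r) : finner (-A) B = -finner A B := by
  simpa using finner_smul_left (-1) A B

lemma finner_neg_right {d r : ℕ} (A B : Mat d r) : finner A (-B) = -finner A B := by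
  simpa using finner_smul_right (-1) A B

lemma finner_sub_left {d r : ℕ} (A B C : Mat d r) :
    finner (A - B) C = finner A C - finner B C := by
  rw [sub_eq_add_neg, finner_add_left, finner_neg_left]; ring

lemma finner_sub_right {d r : ℕ} (A B C : Mat d r) :
    finner A (B - C) = finner A B - finner A C := by
  rw [sub_eq_add_neg, finner_add_right, finner_neg_right]; ring

lemma finner_comm {d r : ℕ} (A B : Mat d r) : finner A B = finner B A := by
  simp_rw [finner_sum, mul_comm]

lemma finner_le {d r : ℕ} (A B : Mat d r) : finner A B ≤ ‖A‖ * ‖B‖ := by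
  have h1 : ‖A‖ = Real.sqrt (finner A A) := by
    rw [← sq_norm]; exact (Real.sqrt_sq (norm_nonneg A)).symm
  have h2 : ‖B‖ = Real.sqrt (finner B B) := by
    rw [← sq_norm]; exact (Real.sqrt_sq (norm_nonneg B)).symm
  rw [h1, h2, finner_sum, finner_sum, finner_sum]
  simp_rw [← Fintype.sum_prod_type', ← pow_two]
  exact Real.sum_mul_le_sqrt_mul_sqrt _ _ _

lemma tangent_comb {d r : ℕ} {X ζ ζ' : Mat d r} (a b : ℝ)
    (h1 : ζ ∈ TangentAt X) (h2 : ζ' ∈ TangentAt X) :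
    a • ζ + b • ζ' ∈ TangentAt X := by
  simp only [TangentAt, Set.mem_setOf_eq] at *
  have e : (a • ζ + b • ζ')ᵀ * X + Xᵀ * (a • ζ + b • ζ')
      = a • (ζᵀ * X + Xᵀ * ζ) + b • (ζ'ᵀ * X + Xᵀ * ζ') := by
    simp [Matrix.transpose_add, Matrix.transpose_smul, Matrix.add_mul, Matrix.mul_add,
      Matrix.smul_mul, Matrix.mul_smul, smul_add]
    abel
  rw [e, h1, h2]; simp

lemma submin_strong {d r : ℕ} {γ : ℝ} (hγ : 0 < γ) {h : Mat d r → ℝ}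
    (hconv : ConvexOn ℝ Set.univ h) {X v ζ : Mat d r}
    (hmin : IsSubMin γ h X v ζ) {ζ' : Mat d r} (hζ' : ζ' ∈ TangentAt X) :
    phi γ h X v ζ + (1 / (2 * γ)) * ‖ζ' - ζ‖ ^ 2 ≤ phi γ h X v ζ' := by
  have key : ∀ t : ℝ, 0 < t → t ≤ 1 →
      (1 / (2 * γ)) * (1 - t) * ‖ζ' - ζ‖ ^ 2 ≤ phi γ h X v ζ' - phi γ h X v ζ := by
    intro t ht ht1
    set m : Mat d r := (1 - t) • ζ + t • ζ' with hm_def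
    have hm : m ∈ TangentAt X := tangent_comb _ _ hmin.1 hζ'
    have hlow : phi γ h X v ζ ≤ phi γ h X v m := hmin.2 m hm
    have hq : ‖m‖ ^ 2 = (1 - t) * ‖ζ‖ ^ 2 + t * ‖ζ'‖ ^ 2 - t * (1 - t) * ‖ζ' - ζ‖ ^ 2 := by
      simp only [hm_def, sq_norm, finner_add_left, finner_add_right, finner_smul_left,
        finner_smul_right, finner_sub_left, finner_sub_right]
      ring
    have hq2 : (1 / (2 * γ)) * ‖m‖ ^ 2
        = (1 / (2 * γ)) * ((1 - t) * ‖ζ‖ ^ 2 + t * ‖ζ'‖ ^ 2 - t * (1 - t) * ‖ζ' - ζ‖ ^ 2) := by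
      rw [hq]
    have hl : finner v m = (1 - t) * finner v ζ + t * finner v ζ' := by
      simp only [hm_def, finner_add_right, finner_smul_right]
    have hXm : X + m = (1 - t) • (X + ζ) + t • (X + ζ') := by
      simp only [hm_def]; module
    have hh : h (X + m) ≤ (1 - t) * h (X + ζ) + t * h (X + ζ') := by
      rw [hXm]
      exact hconv.2 (Set.mem_univ _) (Set.mem_univ _) (by linarith) (le_of_lt ht) (by ring)
    have step : t * ((1 / (2 * γ)) * (1 - t) * ‖ζ' - ζ‖ ^ 2)
        ≤ t * (phi γ h X v ζ' - phi γ h X v ζ) := by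
      simp only [phi] at hlow ⊢
      nlinarith [hlow, hq2, hl, hh]
    exact le_of_mul_le_mul_left step ht
  have hc : 0 < 1 / (2 * γ) := by positivity
  have hDsq : (0:ℝ) ≤ ‖ζ' - ζ‖ ^ 2 := sq_nonneg _
  have h0 : 0 ≤ phi γ h X v ζ' - phi γ h X v ζ := by
    have := key 1 one_pos le_rfl; simpa using this
  rcases eq_or_lt_of_le hDsq with hz | hpos
  · rw [← hz]; linarith
  · have : (1 / (2 * γ)) * ‖ζ' - ζ‖ ^ 2 ≤ phi γ h X v ζ' - phi γ h X v ζ := by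
      apply le_of_forall_pos_le_add
      intro ε hε
      set t : ℝ := min 1 (ε / ((1 / (2 * γ)) * ‖ζ' - ζ‖ ^ 2)) with ht_def
      have htpos : 0 < t := lt_min one_pos (by positivity)
      have ht1 : t ≤ 1 := min_le_left _ _
      have hk := key t htpos ht1
      have htb : t * ((1 / (2 * γ)) * ‖ζ' - ζ‖ ^ 2) ≤ ε := by
        have h2 : t ≤ ε / ((1 / (2 * γ)) * ‖ζ' - ζ‖ ^ 2) := min_le_right _ _
        have hp : 0 < (1 / (2 * γ)) * ‖ζ' - ζ‖ ^ 2 := by positivity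
        calc t * ((1 / (2 * γ)) * ‖ζ' - ζ‖ ^ 2)
            ≤ (ε / ((1 / (2 * γ)) * ‖ζ' - ζ‖ ^ 2)) * ((1 / (2 * γ)) * ‖ζ' - ζ‖ ^ 2) :=
              mul_le_mul_of_nonneg_right h2 (le_of_lt hp)
          _ = ε := div_mul_cancel₀ _ (ne_of_gt hp)
      nlinarith [hk, htb]
    linarith

/-- nonexpansiveness of the subproblem solution in the linear term:
if `ζ` minimizes the subproblem for `v` and `ξ` minimizes it for `w`, then
`‖ξ − ζ‖ ≤ γ‖v − w‖`. -/
theorem subproblem_minimizer_nonexpansive {d r : ℕ} (γ : ℝ) (hγ : 0 < γ)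
    (X : Mat d r) (hX : Stiefel X)
    (h : Mat d r → ℝ) (hconv : ConvexOn ℝ Set.univ h)
    (v w ζ ξ : Mat d r)
    (hζ : IsSubMin γ h X v ζ) (hξ : IsSubMin γ h X w ξ) :
    ‖ξ - ζ‖ ≤ γ * ‖v - w‖ := by
  have h1 := submin_strong hγ hconv hζ hξ.1
  have h2 := submin_strong hγ hconv hξ hζ.1
  have hn : ‖ζ - ξ‖ = ‖ξ - ζ‖ := norm_sub_rev _ _
  rw [hn] at h2
  simp only [phi] at h1 h2
  have hfe : finner (v - w) (ξ - ζ)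
      = finner v ξ - finner v ζ - (finner w ξ - finner w ζ) := by
    simp only [finner_sub_left, finner_sub_right]; ring
  have hcs : finner (v - w) (ξ - ζ) ≤ ‖v - w‖ * ‖ξ - ζ‖ := finner_le _ _
  have hkey : (1 / γ) * ‖ξ - ζ‖ ^ 2 ≤ ‖v - w‖ * ‖ξ - ζ‖ := by
    have hγ' : γ ≠ 0 := ne_of_gt hγ
    have : (1 / γ) * ‖ξ - ζ‖ ^ 2 = 2 * ((1 / (2 * γ)) * ‖ξ - ζ‖ ^ 2) := by
      field_simp
    rw [this]
    linarith [h1, h2, hcs, hfe.symm.le, hfe.le]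
  rcases eq_or_lt_of_le (norm_nonneg (ξ - ζ)) with hz | hpos
  · rw [← hz]; positivity
  · have hγ' : γ ≠ 0 := ne_of_gt hγ
    rw [div_mul_eq_mul_div, one_mul, div_le_iff₀ hγ] at hkey
    -- hkey : ‖ξ - ζ‖^2 ≤ ‖v-w‖ * ‖ξ-ζ‖ * γ
    nlinarith [hkey, hpos]
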